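/- arXiv:1108.3588 — 3 statements merged into one kernel-verified Lean document; each statement's English description precedes it below -/
import Mathlib

section
/- Suppose Γ_D is bipartite. Then B is signable if and only if ⟨i,j⟩·(B⁻¹)_{i,j} ≥ 0 for all i ≤ j. -/
open Matrix

/-- A square integer matrix `M` is *signable* if there is a signing vector `s`
(valued in `{+1, -1}`) with `s i * M i j * s j = |M i j|` for all `i, j`. -/
def IsSignable {k : ℕ} (M : Matrix (Fin k) (Fin k) ℤ) : Prop :=
  ∃ s : Fin k → ℤ, (∀ i, s i = 1 ∨ s i = -1) ∧ ∀ i j, s i * M i j * s j = |M i j|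

/-- `{i, j}` is an edge of the maximal-path subgraph `Γ_D` of the digraph `D` with
adjacency matrix `B - 1`: there is an edge from `i` to `j` and no directed path
of length `≥ 2` from `i` to `j`. -/
def GammaEdge {k : ℕ} (B : Matrix (Fin k) (Fin k) ℤ) (i j : Fin k) : Prop :=
  i < j ∧ 1 ≤ B i j ∧ ∀ m : ℕ, 2 ≤ m → ((B - 1) ^ m) i j = 0

/-- The maximal-path subgraph `Γ_D` is bipartite. -/
def GammaBipartite {k : ℕ} (B : Matrix (Fin k) (Fin k) ℤ) : Prop :=
  ∃ c : Fin k → Bool, ∀ i j : Fin k, GammaEdge B i j → c i ≠ c j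

open Classical in
/-- The pairing `⟨i,j⟩`: it is `1` on the diagonal, `(-1)^ℓ(i,j)` where `ℓ(i,j)` is the
length of a longest directed path from `i` to `j` when such a path exists, and `0`
otherwise. -/
noncomputable def pairing {k : ℕ} (B : Matrix (Fin k) (Fin k) ℤ) (i j : Fin k) : ℤ :=
  if i = j then 1
  else if ∃ m : ℕ, 1 ≤ m ∧ ((B - 1) ^ m) i j ≠ 0 then
    (-1 : ℤ) ^ sSup {m : ℕ | 1 ≤ m ∧ ((B - 1) ^ m) i j ≠ 0}
  else 0

/-- `B⁽ᵛ⁾`: the matrix obtained from `B` by replacing every off-diagonal entry in row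
`v` and in column `v` by `0` (deleting the vertex `v` from the digraph). -/
def vertexDelete {k : ℕ} (B : Matrix (Fin k) (Fin k) ℤ) (v : Fin k) :
    Matrix (Fin k) (Fin k) ℤ :=
  Matrix.of fun i j => if i ≠ j ∧ (i = v ∨ j = v) then 0 else B i j

/-- `(i,j)` is a zero pair: no directed path from `i` to `j`. -/
def ZeroPair {k : ℕ} (B : Matrix (Fin k) (Fin k) ℤ) (i j : Fin k) : Prop :=
  ∀ m : ℕ, 1 ≤ m → ((B - 1) ^ m) i j = 0

/-- `(i,j)` is a unit pair: all directed paths from `i` to `j` have length one. -/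
def UnitPair {k : ℕ} (B : Matrix (Fin k) (Fin k) ℤ) (i j : Fin k) : Prop :=
  1 ≤ B i j ∧ ∀ m : ℕ, 2 ≤ m → ((B - 1) ^ m) i j = 0

/-- `(i,j)` is a composite pair: every directed path from `i` to `j` passes through
some fixed intermediate vertex `v`. -/
def CompositePair {k : ℕ} (B : Matrix (Fin k) (Fin k) ℤ) (i j : Fin k) : Prop :=
  ∃ v : Fin k, i < v ∧ v < j ∧ ∀ m : ℕ, 1 ≤ m → ((vertexDelete B v - 1) ^ m) i j = 0

/-- `(i,j)` is a prime pair: `i < j` and `(i,j)` is neither a zero pair, a unit pair,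
nor a composite pair. -/
def PrimePair {k : ℕ} (B : Matrix (Fin k) (Fin k) ℤ) (i j : Fin k) : Prop :=
  i < j ∧ ¬ZeroPair B i j ∧ ¬UnitPair B i j ∧ ¬CompositePair B i j

/-! Write `N = B - 1`. Since `N` is strictly upper triangular, `B⁻¹ = ∑ₘ (-1)ᵐ Nᵐ`, so
`(B⁻¹) i j = -B i j` on an edge of `Γ_D`, and `(B⁻¹) i j = 0` when there is no path from `i` to `j`.
The edges of a longest path are edges of `Γ_D` (a longer detour would lengthen the path), so
a signing that is `-1` across every edge of `Γ_D` satisfies `s i * s j = ⟨i,j⟩` whenever a path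
exists; hence `⟨i,j⟩ * (B⁻¹) i j = s i * (B⁻¹) i j * s j` for every such signing. A signing of
`B⁻¹` is `-1` across the edges of `Γ_D` (where `B⁻¹` is negative), and a `2`-colouring of `Γ_D`
gives such a signing. -/

open Finset

namespace Matrix

variable {R ι : Type*} [DecidableEq ι]

theorem sub_one_apply_of_ne [Ring R] {B : Matrix ι ι R} {i j : ι} (hij : i ≠ j) :
    (B - 1) i j = B i j := by
  rw [sub_apply, one_apply_ne hij, sub_zero]

variable [Fintype ι]

theorem pow_apply_eq_zero_of_lt_add [Semiring R] {n : ℕ} {N : Matrix (Fin n) (Fin n) R}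
    (hN : ∀ i j, j ≤ i → N i j = 0) {m : ℕ} {i j : Fin n} (h : (j : ℕ) < i + m) :
    (N ^ m) i j = 0 := by
  induction m generalizing j with
  | zero => exact one_apply_ne (by rintro rfl; omega)
  | succ m ih =>
    rw [pow_succ, mul_apply]
    refine sum_eq_zero fun k _ => ?_
    rcases lt_or_ge (k : ℕ) (i + m) with hk | hk
    · rw [ih hk, zero_mul]
    · rw [hN k j (by rw [Fin.le_def]; omega), mul_zero]

theorem inv_eq_sum_pow_of_pow_eq_zero [CommRing R] {B : Matrix ι ι R} {k : ℕ}
    (hk : (1 - B) ^ k = 0) : B⁻¹ = ∑ m ∈ range k, (1 - B) ^ m :=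
  inv_eq_right_inv <| by simpa [hk] using mul_neg_geom_sum (1 - B) k

def pathLengths [Semiring R] (N : Matrix ι ι R) (i j : ι) : Set ℕ :=
  {m | 1 ≤ m ∧ (N ^ m) i j ≠ 0}

theorem add_mem_pathLengths [Semiring R] [PartialOrder R] [IsStrictOrderedRing R]
    {N : Matrix ι ι R} (hN : ∀ i j, 0 ≤ N i j) {i k j : ι} {a b : ℕ}
    (ha : a ∈ N.pathLengths i k) (hb : b ∈ N.pathLengths k j) :
    a + b ∈ N.pathLengths i j := by
  have hterm : ∀ x, 0 ≤ (N ^ a) i x * (N ^ b) x j := fun x =>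
    mul_nonneg (pow_apply_nonneg hN a i x) (pow_apply_nonneg hN b x j)
  refine ⟨by linarith [ha.1], ne_of_gt ?_⟩
  calc 0 < (N ^ a) i k * (N ^ b) k j :=
        mul_pos ((pow_apply_nonneg hN a i k).lt_of_ne' ha.2)
          ((pow_apply_nonneg hN b k j).lt_of_ne' hb.2)
    _ ≤ ∑ x, (N ^ a) i x * (N ^ b) x j := single_le_sum (fun x _ => hterm x) (mem_univ k)
    _ = (N ^ (a + b)) i j := by rw [pow_add, mul_apply]

section StrictlyUpper

variable [Semiring R] {n : ℕ} {N : Matrix (Fin n) (Fin n) R}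

theorem pathLengths_bddAbove (hN : ∀ i j, j ≤ i → N i j = 0) (i j : Fin n) :
    BddAbove (N.pathLengths i j) :=
  ⟨n, fun m hm => by
    by_contra hlt
    have := j.isLt
    exact hm.2 (pow_apply_eq_zero_of_lt_add hN (by omega))⟩

theorem isGreatest_sSup_pathLengths (hN : ∀ i j, j ≤ i → N i j = 0) {i j : Fin n}
    (hne : (N.pathLengths i j).Nonempty) :
    IsGreatest (N.pathLengths i j) (sSup (N.pathLengths i j)) :=
  ⟨Nat.sSup_mem hne (pathLengths_bddAbove hN i j),
    fun _ hm => le_csSup (pathLengths_bddAbove hN i j) hm⟩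

theorem pathLengths_eq_empty_of_le (hN : ∀ i j, j ≤ i → N i j = 0) {i j : Fin n}
    (hji : j ≤ i) : N.pathLengths i j = ∅ :=
  Set.eq_empty_of_forall_notMem fun m hm =>
    hm.2 (pow_apply_eq_zero_of_lt_add hN (by rw [Fin.le_def] at hji; linarith [hm.1]))

end StrictlyUpper

section Unitriangular

variable [CommRing R] {n : ℕ} {B : Matrix (Fin n) (Fin n) R}

theorem sub_one_apply_eq_zero_of_le (h1 : ∀ i, B i i = 1)
    (h2 : ∀ i j, j < i → B i j = 0) {i j : Fin n} (hji : j ≤ i) : (B - 1) i j = 0 := by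
  rcases hji.lt_or_eq with hlt | rfl
  · rw [sub_apply, h2 i j hlt, one_apply_ne hlt.ne', sub_zero]
  · rw [sub_apply, h1, one_apply_eq, sub_self]

theorem sub_one_apply_nonneg [Preorder R] (h1 : ∀ i, B i i = 1) (h2 : ∀ i j, j < i → B i j = 0)
    (h3 : ∀ i j, i < j → 0 ≤ B i j) (i j : Fin n) : 0 ≤ (B - 1) i j := by
  rcases lt_or_ge i j with hij | hji
  · rw [sub_one_apply_of_ne hij.ne]
    exact h3 i j hij
  · exact (sub_one_apply_eq_zero_of_le h1 h2 hji).ge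

theorem inv_apply_eq_sum (hN : ∀ i j, j ≤ i → (B - 1) i j = 0) (i j : Fin n) :
    B⁻¹ i j = ∑ m ∈ range n, (-1) ^ m * ((B - 1) ^ m) i j := by
  have hnil : (B - 1) ^ n = 0 := by
    ext i j
    exact pow_apply_eq_zero_of_lt_add hN (by omega)
  have hneg : ∀ m, (1 - B) ^ m = (-1 : R) ^ m • (B - 1) ^ m := fun m => by
    rw [← neg_sub, ← neg_one_smul R (B - 1), smul_pow]
  rw [inv_eq_sum_pow_of_pow_eq_zero (by rw [hneg, hnil, smul_zero])]
  simp only [hneg, sum_apply, smul_apply, smul_eq_mul]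

theorem inv_apply_self (hN : ∀ i j, j ≤ i → (B - 1) i j = 0) (i : Fin n) :
    B⁻¹ i i = 1 := by
  rw [inv_apply_eq_sum hN, sum_eq_single_of_mem 0 (mem_range.2 i.pos)]
  · simp
  · intro m _ hm
    rw [pow_apply_eq_zero_of_lt_add hN (by omega), mul_zero]

theorem inv_apply_eq_zero_of_pathLengths_eq_empty
    (hN : ∀ i j, j ≤ i → (B - 1) i j = 0) {i j : Fin n} (hij : i ≠ j)
    (h : (B - 1).pathLengths i j = ∅) : B⁻¹ i j = 0 := by
  rw [inv_apply_eq_sum hN]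
  refine sum_eq_zero fun m _ => ?_
  rcases Nat.eq_zero_or_pos m with rfl | hm
  · rw [pow_zero, pow_zero, one_apply_ne hij, mul_zero]
  · have : ((B - 1) ^ m) i j = 0 := by
      by_contra hne
      exact (Set.eq_empty_iff_forall_notMem.1 h m) ⟨hm, hne⟩
    rw [this, mul_zero]

end Unitriangular

end Matrix

section IntegerUnitriangular

variable {n : ℕ} {B : Matrix (Fin n) (Fin n) ℤ}

theorem inv_apply_of_gammaEdge (hN : ∀ i j : Fin n, j ≤ i → (B - 1) i j = 0) {i j : Fin n}
    (he : GammaEdge B i j) : B⁻¹ i j = -B i j := by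
  obtain ⟨hij, -, hlong⟩ := he
  have := j.isLt
  rw [inv_apply_eq_sum hN, sum_eq_single_of_mem 1 (mem_range.2 (by rw [Fin.lt_def] at hij; omega))]
  · rw [pow_one, pow_one, sub_one_apply_of_ne hij.ne, neg_one_mul]
  · intro m _ hm
    rcases Nat.lt_or_ge m 2 with h | h
    · obtain rfl : m = 0 := by omega
      rw [pow_zero, pow_zero, one_apply_ne hij.ne, mul_zero]
    · rw [hlong m h, mul_zero]

theorem gammaEdge_of_isGreatest_one (hN : ∀ i j : Fin n, j ≤ i → (B - 1) i j = 0)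
    (hN0 : ∀ i j, 0 ≤ (B - 1) i j) {i j : Fin n}
    (h : IsGreatest ((B - 1).pathLengths i j) 1) : GammaEdge B i j := by
  have hne : (B - 1) i j ≠ 0 := by simpa using h.1.2
  have hij : i < j := lt_of_not_ge fun hji => hne (hN i j hji)
  refine ⟨hij, ?_, fun m hm => ?_⟩
  · have := hN0 i j
    rw [sub_one_apply_of_ne hij.ne] at hne this
    omega
  · by_contra hm'
    have := h.2 ⟨by omega, hm'⟩
    omega

/-- A longest path splits into an edge of `Γ_D` followed by a longest path. -/
theorem mul_eq_neg_one_pow_of_isGreatest (hN : ∀ i j : Fin n, j ≤ i → (B - 1) i j = 0)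
    (hN0 : ∀ i j, 0 ≤ (B - 1) i j) {s : Fin n → ℤ} (hs : ∀ i, s i = 1 ∨ s i = -1)
    (hedge : ∀ i j, GammaEdge B i j → s i * s j = -1) {L : ℕ} :
    ∀ {i j : Fin n}, IsGreatest ((B - 1).pathLengths i j) L → s i * s j = (-1) ^ L := by
  induction L with
  | zero => exact fun h => absurd h.1.1 (by norm_num)
  | succ l ih =>
    intro i j h
    rcases Nat.eq_zero_or_pos l with rfl | hl
    · rw [hedge i j (gammaEdge_of_isGreatest_one hN hN0 h), pow_one]
    obtain ⟨k, -, hk⟩ := exists_ne_zero_of_sum_ne_zero (by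
      simpa only [pow_succ', mul_apply] using h.1.2)
    have hik : 1 ∈ (B - 1).pathLengths i k := ⟨le_rfl, by simpa using left_ne_zero_of_mul hk⟩
    have hkj : l ∈ (B - 1).pathLengths k j := ⟨hl, right_ne_zero_of_mul hk⟩
    have hik' : IsGreatest ((B - 1).pathLengths i k) 1 := ⟨hik, fun m hm => by
      have := h.2 (add_mem_pathLengths hN0 hm hkj)
      omega⟩
    have hkj' : IsGreatest ((B - 1).pathLengths k j) l := ⟨hkj, fun m hm => by
      have := h.2 (add_mem_pathLengths hN0 hik hm)
      omega⟩
    have hsk : s k * s k = 1 := by rcases hs k with h | h <;> simp [h]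
    calc s i * s j = (s i * s k) * (s k * s j) := by linear_combination (-(s i * s j)) * hsk
      _ = (-1) ^ (l + 1) := by
        rw [hedge i k (gammaEdge_of_isGreatest_one hN hN0 hik'), ih hkj', pow_succ']

open Classical in
theorem pairing_of_ne {i j : Fin n} (hij : i ≠ j) :
    pairing B i j = if ((B - 1).pathLengths i j).Nonempty
      then (-1) ^ sSup ((B - 1).pathLengths i j) else 0 :=
  if_neg hij

theorem pairing_mul_inv_apply (hN : ∀ i j : Fin n, j ≤ i → (B - 1) i j = 0)
    (hN0 : ∀ i j, 0 ≤ (B - 1) i j) {s : Fin n → ℤ} (hs : ∀ i, s i = 1 ∨ s i = -1)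
    (hedge : ∀ i j, GammaEdge B i j → s i * s j = -1) (i j : Fin n) :
    pairing B i j * B⁻¹ i j = s i * B⁻¹ i j * s j := by
  rcases eq_or_ne i j with rfl | hij
  · rw [pairing, if_pos rfl, inv_apply_self hN]
    rcases hs i with h | h <;> simp [h]
  by_cases hne : ((B - 1).pathLengths i j).Nonempty
  · rw [pairing_of_ne hij, if_pos hne,
      ← mul_eq_neg_one_pow_of_isGreatest hN hN0 hs hedge (isGreatest_sSup_pathLengths hN hne)]
    ring
  · rw [inv_apply_eq_zero_of_pathLengths_eq_empty hN hij (Set.not_nonempty_iff_eq_empty.1 hne)]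
    simp

theorem mul_eq_neg_one_of_gammaEdge (hN : ∀ i j : Fin n, j ≤ i → (B - 1) i j = 0)
    {s : Fin n → ℤ} (hs : ∀ i, s i = 1 ∨ s i = -1)
    (hsign : ∀ i j, s i * B⁻¹ i j * s j = |B⁻¹ i j|) {i j : Fin n} (he : GammaEdge B i j) :
    s i * s j = -1 := by
  have hB := he.2.1
  have h := hsign i j
  rw [inv_apply_of_gammaEdge hN he, abs_neg, abs_of_pos (by omega)] at h
  rcases hs i with hi | hi <;> rcases hs j with hj | hj <;> simp only [hi, hj] at h ⊢ <;> linarith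

end IntegerUnitriangular

theorem exists_signing_of_gammaBipartite {n : ℕ} {B : Matrix (Fin n) (Fin n) ℤ}
    (h : GammaBipartite B) :
    ∃ s : Fin n → ℤ, (∀ i, s i = 1 ∨ s i = -1) ∧ ∀ i j, GammaEdge B i j → s i * s j = -1 := by
  obtain ⟨c, hc⟩ := h
  refine ⟨fun i => if c i then 1 else -1, fun i => by by_cases c i <;> simp [*], fun i j he => ?_⟩
  have := hc i j he
  cases hci : c i <;> cases hcj : c j <;> simp_all

theorem stmt5_general {n : ℕ} (B : Matrix (Fin n) (Fin n) ℤ)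
    (h1 : ∀ i, B i i = 1) (h2 : ∀ i j : Fin n, j < i → B i j = 0)
    (h3 : ∀ i j : Fin n, i < j → 0 ≤ B i j)
    (hbip : GammaBipartite B) :
    IsSignable B⁻¹ ↔ ∀ i j : Fin n, i ≤ j → 0 ≤ pairing B i j * B⁻¹ i j := by
  have hN : ∀ i j : Fin n, j ≤ i → (B - 1) i j = 0 := fun _ _ => sub_one_apply_eq_zero_of_le h1 h2
  have hN0 := sub_one_apply_nonneg h1 h2 h3
  constructor
  · rintro ⟨s, hs, hsign⟩ i j -
    rw [pairing_mul_inv_apply hN hN0 hs (fun _ _ => mul_eq_neg_one_of_gammaEdge hN hs hsign),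
      hsign]
    exact abs_nonneg _
  · intro h
    obtain ⟨s, hs, hedge⟩ := exists_signing_of_gammaBipartite hbip
    refine ⟨s, hs, fun i j => ?_⟩
    have habs : |s i * B⁻¹ i j * s j| = |B⁻¹ i j| := by
      rcases hs i with hi | hi <;> rcases hs j with hj | hj <;> simp [hi, hj]
    rw [← habs, eq_comm, abs_eq_self, ← pairing_mul_inv_apply hN hN0 hs hedge]
    rcases le_or_gt i j with hij | hji
    · exact h i j hij
    · rw [inv_apply_eq_zero_of_pathLengths_eq_empty hN hji.ne'
        (pathLengths_eq_empty_of_le hN hji.le), mul_zero]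

/-- Suppose `Γ_D` is bipartite.  Then `B` is signable iff
`⟨i,j⟩ * (B⁻¹) i j ≥ 0` for all `i ≤ j`. -/
theorem stmt5 {n : ℕ} (hn : 1 ≤ n) (B : Matrix (Fin n) (Fin n) ℤ)
    (h1 : ∀ i, B i i = 1) (h2 : ∀ i j : Fin n, j < i → B i j = 0)
    (h3 : ∀ i j : Fin n, i < j → 0 ≤ B i j)
    (hbip : GammaBipartite B) :
    IsSignable B⁻¹ ↔ ∀ i j : Fin n, i ≤ j → 0 ≤ pairing B i j * B⁻¹ i j :=
  stmt5_general B h1 h2 h3 hbip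
end

section
/- Suppose B_{i,j} ≤ 1 for all i < j (D is a simple digraph), B is signable, and D⁺ is bipartite. Then |(B⁻¹)_{i,j}| ≤ 1 for all i < j (i.e., D is simply invertible). -/
/-!
Combine a signing `s` of `B⁻¹` with the `±1` coloring `σ` of a bipartition of `D⁺`: since every
nonzero entry of `B⁻¹` above the diagonal joins two colors, the signing `t = σ s` makes all of them
negative, i.e. `t B⁻¹ t = 1 - N` with `N` strictly upper triangular and `N i j = |B⁻¹ i j|`. Hence
`t B t = (1 - N)⁻¹ = ∑ₘ Nᵐ ≥ N` entrywise, and `|B⁻¹ i j| ≤ |B i j| ≤ 1`.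
-/

open Matrix

namespace Matrix

variable {ι R : Type*} [Fintype ι]

theorem apply_le_of_mul_one_sub_eq_one [DecidableEq ι] [Ring R] [PartialOrder R]
    [IsOrderedRing R] {A N : Matrix ι ι R} (hN : ∀ i j, 0 ≤ N i j) (hnil : IsNilpotent N)
    (hA : A * (1 - N) = 1) (i j : ι) : N i j ≤ A i j := by
  obtain ⟨k, hk⟩ := hnil
  have hgeom : A = ∑ m ∈ Finset.range (k + 2), N ^ m := by
    calc A = A * ((1 - N) * ∑ m ∈ Finset.range (k + 2), N ^ m) := by
            rw [mul_neg_geom_sum, pow_add, hk, zero_mul, sub_zero, Matrix.mul_one]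
      _ = ∑ m ∈ Finset.range (k + 2), N ^ m := by rw [← Matrix.mul_assoc, hA, Matrix.one_mul]
  rw [hgeom, sum_apply]
  simpa using Finset.single_le_sum (f := fun m => (N ^ m) i j)
    (fun m _ => pow_apply_nonneg hN m i j) (Finset.mem_range.mpr (by omega : 1 < k + 2))

section Signs

variable [DecidableEq ι] [Ring R] {t : ι → R}

theorem diagonal_mul_diagonal_eq_one_of_sign (ht : ∀ i, t i = 1 ∨ t i = -1) :
    diagonal t * diagonal t = 1 := by
  rw [diagonal_mul_diagonal, ← diagonal_one]
  congr 1
  funext i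
  rcases ht i with h | h <;> simp [h]

theorem diagonal_mul_mul_diagonal_apply_le_abs [LinearOrder R] [IsOrderedRing R]
    (ht : ∀ i, t i = 1 ∨ t i = -1) (A : Matrix ι ι R) (i j : ι) :
    (diagonal t * A * diagonal t) i j ≤ |A i j| := by
  rcases ht i with hi | hi <;> rcases ht j with hj | hj <;>
    simp [diagonal_mul, mul_diagonal, hi, hj, le_abs_self, neg_le_abs]

end Signs

section Triangular

variable [LinearOrder ι]

theorem IsUpperTriangular.mul_apply_self [Semiring R] {M N : Matrix ι ι R}
    (hM : M.IsUpperTriangular) (hN : N.IsUpperTriangular) (i : ι) :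
    (M * N) i i = M i i * N i i := by
  rw [mul_apply, Finset.sum_eq_single i]
  · intro k _ hk
    rcases hk.lt_or_gt with hlt | hlt
    · rw [hM hlt, zero_mul]
    · rw [hN hlt, mul_zero]
  · simp

variable [DecidableEq ι] [CommRing R] {M : Matrix ι ι R}

theorem isNilpotent_of_isUpperTriangular_of_diag_eq_zero (hM : M.IsUpperTriangular)
    (hdiag : ∀ i, M i i = 0) : IsNilpotent M :=
  ⟨Fintype.card ι, by simpa [charpoly_of_isUpperTriangular M hM, hdiag] using aeval_self_charpoly M⟩

theorem det_eq_one_of_isUpperTriangular (hM : M.IsUpperTriangular) (hdiag : ∀ i, M i i = 1) :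
    M.det = 1 := by
  simp [det_of_isUpperTriangular hM, hdiag]

theorem IsUpperTriangular.inv (hM : M.IsUpperTriangular) : M⁻¹.IsUpperTriangular := by
  by_cases h : IsUnit M.det
  · let := M.invertibleOfIsUnitDet h
    exact blockTriangular_inv_of_blockTriangular hM
  · rw [nonsing_inv_apply_not_isUnit M h]
    exact blockTriangular_zero

theorem inv_apply_self_of_isUpperTriangular (hM : M.IsUpperTriangular) (hdiag : ∀ i, M i i = 1)
    (i : ι) : M⁻¹ i i = 1 := by
  have hunit : IsUnit M.det := by rw [det_eq_one_of_isUpperTriangular hM hdiag]; exact isUnit_one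
  simpa [hM.inv.mul_apply_self hM, hdiag] using congrFun₂ (nonsing_inv_mul M hunit) i i

end Triangular

end Matrix

theorem IsSignable.exists_diagonal_mul_mul_diagonal_eq_one_sub {k : ℕ}
    {C : Matrix (Fin k) (Fin k) ℤ} (hsig : IsSignable C) (hC : C.IsUpperTriangular)
    (hdiag : ∀ i, C i i = 1)
    (hbip : ∃ c : Fin k → Bool, ∀ i j : Fin k, i < j → C i j ≠ 0 → c i ≠ c j) :
    ∃ t : Fin k → ℤ, (∀ i, t i = 1 ∨ t i = -1) ∧
      diagonal t * C * diagonal t = 1 - of fun i j => if i < j then |C i j| else 0 := by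
  obtain ⟨s, hs, hsC⟩ := hsig
  obtain ⟨c, hc⟩ := hbip
  set σ : Fin k → ℤ := fun i => if c i then 1 else -1
  have hσ : ∀ i j, c i ≠ c j → σ i * σ j = -1 := by
    intro i j hij
    cases hci : c i <;> cases hcj : c j <;> simp_all [σ]
  refine ⟨fun i => σ i * s i, fun i => ?_, ?_⟩
  · rcases hs i with h | h <;> cases hci : c i <;> simp [σ, h, hci]
  ext i j
  simp only [diagonal_mul, mul_diagonal, Matrix.sub_apply, one_apply, of_apply]
  rcases lt_trichotomy i j with hij | rfl | hji
  · by_cases hz : C i j = 0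
    · simp [hz, hij.ne]
    · calc σ i * s i * C i j * (σ j * s j) = σ i * σ j * (s i * C i j * s j) := by ring
        _ = _ := by simp [hσ i j (hc i j hij hz), hsC, hij, hij.ne]
  · rcases hs i with h | h <;> cases hci : c i <;> simp [hdiag, h, σ, hci]
  · simp [hC hji, hji.ne', hji.not_gt]

theorem stmt7_general {n : ℕ} (B : Matrix (Fin n) (Fin n) ℤ)
    (h1 : ∀ i, B i i = 1) (h2 : ∀ i j : Fin n, j < i → B i j = 0)
    (h3 : ∀ i j : Fin n, i < j → 0 ≤ B i j)
    (hsimple : ∀ i j : Fin n, i < j → B i j ≤ 1)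
    (hsig : IsSignable B⁻¹)
    (hplus : ∃ c : Fin n → Bool, ∀ i j : Fin n, i < j → B⁻¹ i j ≠ 0 → c i ≠ c j) :
    ∀ i j : Fin n, i < j → |B⁻¹ i j| ≤ 1 := by
  have hB : B.IsUpperTriangular := fun i j hji => h2 i j hji
  have hBC : B * B⁻¹ = 1 :=
    mul_nonsing_inv B (by rw [det_eq_one_of_isUpperTriangular hB h1]; exact isUnit_one)
  obtain ⟨t, ht, hconj⟩ := hsig.exists_diagonal_mul_mul_diagonal_eq_one_sub hB.inv
    (inv_apply_self_of_isUpperTriangular hB h1) hplus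
  set N : Matrix (Fin n) (Fin n) ℤ := of fun i j => if i < j then |B⁻¹ i j| else 0
  set D := diagonal t
  have hDD : D * D = 1 := diagonal_mul_diagonal_eq_one_of_sign ht
  have hinv : D * B * D * (1 - N) = 1 := by
    rw [← hconj, show D * B * D * (D * B⁻¹ * D) = D * (B * (D * D) * B⁻¹) * D by
      simp only [Matrix.mul_assoc], hDD, Matrix.mul_one, hBC, Matrix.mul_one, hDD]
  have hN : IsNilpotent N :=
    isNilpotent_of_isUpperTriangular_of_diag_eq_zero (fun i j (hji : j < i) => by
      simp [N, hji.not_gt]) (by simp [N])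
  intro i j hij
  calc |B⁻¹ i j| = N i j := by simp [N, hij]
    _ ≤ (D * B * D) i j :=
      apply_le_of_mul_one_sub_eq_one (fun i j => by by_cases h : i < j <;> simp [N, h]) hN hinv i j
    _ ≤ |B i j| := diagonal_mul_mul_diagonal_apply_le_abs ht B i j
    _ ≤ 1 := by rw [abs_of_nonneg (h3 i j hij)]; exact hsimple i j hij

/-- If `D` is a simple digraph (`B i j ≤ 1` off the diagonal), `B` is
signable, and the parity closure `D⁺` is bipartite, then `|(B⁻¹) i j| ≤ 1` for all
`i < j` (`D` is simply invertible). -/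
theorem stmt7 {n : ℕ} (hn : 1 ≤ n) (B : Matrix (Fin n) (Fin n) ℤ)
    (h1 : ∀ i, B i i = 1) (h2 : ∀ i j : Fin n, j < i → B i j = 0)
    (h3 : ∀ i j : Fin n, i < j → 0 ≤ B i j)
    (hsimple : ∀ i j : Fin n, i < j → B i j ≤ 1)
    (hsig : IsSignable B⁻¹)
    (hplus : ∃ c : Fin n → Bool, ∀ i j : Fin n, i < j → B⁻¹ i j ≠ 0 → c i ≠ c j) :
    ∀ i j : Fin n, i < j → |B⁻¹ i j| ≤ 1 :=
  stmt7_general B h1 h2 h3 hsimple hsig hplus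
end

section
/- Suppose D has no prime pairs. Then B is signable if and only if D is bipartite. -/
open Matrix

/-!
Write `B = 1 + N` with `N` strictly upper triangular, hence nilpotent, so that
`B⁻¹ = ∑ₘ (-N)ᵐ` and `B⁻¹ i j = ∑ₘ (-1)ᵐ · #{paths of length m from i to j}`.
If `s` is the signing vector of a 2-colouring of `D`, every path of length `m` from `i` to `j`
forces `s i * s j = (-1)ᵐ`, so `s i * B⁻¹ i j * s j` counts all paths from `i` to `j` and is
nonnegative. Conversely, an edge `i → j` can neither be a zero pair nor a composite pair (the edge
avoids every intermediate vertex), so in the absence of prime pairs it is a unit pair; then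
`B⁻¹ i j = -B i j`, and a signing of `B⁻¹` must give its endpoints opposite signs.
-/

namespace Matrix

section SignedPowers

variable {ι : Type*} [Fintype ι] [DecidableEq ι]

theorem inv_one_add_eq_sum_neg_pow {R : Type*} [CommRing R] {N : Matrix ι ι R} {k : ℕ}
    (hN : N ^ k = 0) : (1 + N)⁻¹ = ∑ m ∈ Finset.range k, (-N) ^ m := by
  refine inv_eq_left_inv ?_
  have h := geom_sum_mul_neg (-N) k
  rwa [sub_neg_eq_add, neg_pow, hN, mul_zero, sub_zero] at h

theorem neg_pow_apply {R : Type*} [CommRing R] (N : Matrix ι ι R) (m : ℕ) (i j : ι) :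
    ((-N) ^ m) i j = (-1) ^ m * (N ^ m) i j := by
  rw [← neg_one_smul R N, smul_pow, smul_apply, smul_eq_mul]

theorem mul_eq_neg_one_pow_of_pow_apply_ne_zero {R : Type*} [CommRing R] {N : Matrix ι ι R}
    {s : ι → R} (hs : ∀ i, s i * s i = 1) (hN : ∀ i j, N i j ≠ 0 → s i * s j = -1) {m : ℕ}
    {i j : ι} (h : (N ^ m) i j ≠ 0) : s i * s j = (-1) ^ m := by
  induction m generalizing j with
  | zero =>
    obtain rfl : i = j := by
      by_contra hij
      exact h (by rw [pow_zero, one_apply_ne hij])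
    simpa using hs i
  | succ m ih =>
    rw [pow_succ, mul_apply] at h
    obtain ⟨k, -, hk⟩ := Finset.exists_ne_zero_of_sum_ne_zero h
    calc s i * s j = (s i * s k) * (s k * s j) := by
          linear_combination -(s i * s j) * hs k
      _ = (-1) ^ (m + 1) := by
          rw [ih (left_ne_zero_of_mul hk), hN k j (right_ne_zero_of_mul hk), pow_succ]

theorem mul_neg_pow_apply_mul {R : Type*} [CommRing R] {N : Matrix ι ι R} {s : ι → R}
    (hs : ∀ i, s i * s i = 1) (hN : ∀ i j, N i j ≠ 0 → s i * s j = -1) (m : ℕ) (i j : ι) :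
    s i * ((-N) ^ m) i j * s j = (N ^ m) i j := by
  rw [neg_pow_apply]
  by_cases h : (N ^ m) i j = 0
  · rw [h, mul_zero, mul_zero, zero_mul]
  · calc s i * ((-1) ^ m * (N ^ m) i j) * s j = (s i * s j) * (-1) ^ m * (N ^ m) i j := by ring
      _ = (N ^ m) i j := by
          rw [mul_eq_neg_one_pow_of_pow_apply_ne_zero hs hN h, ← pow_add, ← two_mul, pow_mul,
            neg_one_sq, one_pow, one_mul]

end SignedPowers

section StrictUpperTriangular

variable {n : ℕ} {R : Type*}

def IsStrictUpperTriangular [Zero R] (N : Matrix (Fin n) (Fin n) R) : Prop :=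
  ∀ i j, j ≤ i → N i j = 0

theorem IsStrictUpperTriangular.val_add_le_of_pow_apply_ne_zero [Semiring R]
    {N : Matrix (Fin n) (Fin n) R} (hN : N.IsStrictUpperTriangular) {m : ℕ} {i j : Fin n}
    (h : (N ^ m) i j ≠ 0) : (i : ℕ) + m ≤ j := by
  induction m generalizing j with
  | zero =>
    obtain rfl : i = j := by
      by_contra hij
      exact h (by rw [pow_zero, one_apply_ne hij])
    simp
  | succ m ih =>
    rw [pow_succ, mul_apply] at h
    obtain ⟨k, -, hk⟩ := Finset.exists_ne_zero_of_sum_ne_zero h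
    have hik := ih (left_ne_zero_of_mul hk)
    have hkj : k < j := lt_of_not_ge fun hjk => right_ne_zero_of_mul hk (hN k j hjk)
    have := Fin.lt_def.mp hkj
    omega

theorem IsStrictUpperTriangular.pow_eq_zero [Semiring R] {N : Matrix (Fin n) (Fin n) R}
    (hN : N.IsStrictUpperTriangular) : N ^ n = 0 := by
  ext i j
  by_contra h
  have := hN.val_add_le_of_pow_apply_ne_zero h
  have := j.isLt
  omega

end StrictUpperTriangular

end Matrix

theorem isSignable_of_mul_apply_mul_nonneg {k : ℕ} {M : Matrix (Fin k) (Fin k) ℤ}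
    {s : Fin k → ℤ} (hs : ∀ i, s i = 1 ∨ s i = -1) (hM : ∀ i j, 0 ≤ s i * M i j * s j) :
    IsSignable M := by
  refine ⟨s, hs, fun i j => ?_⟩
  have habs : ∀ i, |s i| = 1 := fun i => by rcases hs i with h | h <;> simp [h]
  rw [← abs_of_nonneg (hM i j), abs_mul, abs_mul, habs, habs, one_mul, mul_one]

section Unitriangular

variable {n : ℕ} {B : Matrix (Fin n) (Fin n) ℤ}

theorem isStrictUpperTriangular_sub_one (h1 : ∀ i, B i i = 1)
    (h2 : ∀ i j : Fin n, j < i → B i j = 0) : (B - 1).IsStrictUpperTriangular := by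
  intro i j hji
  rcases hji.lt_or_eq with hji | rfl
  · rw [Matrix.sub_apply, h2 i j hji, one_apply_ne (ne_of_gt hji), sub_zero]
  · rw [Matrix.sub_apply, h1, one_apply_eq, sub_self]

theorem inv_eq_sum_neg_pow (h1 : ∀ i, B i i = 1) (h2 : ∀ i j : Fin n, j < i → B i j = 0) :
    B⁻¹ = ∑ m ∈ Finset.range n, (-(B - 1)) ^ m := by
  simpa only [add_sub_cancel] using
    inv_one_add_eq_sum_neg_pow (isStrictUpperTriangular_sub_one h1 h2).pow_eq_zero

theorem inv_apply_of_unitPair (h1 : ∀ i, B i i = 1) (h2 : ∀ i j : Fin n, j < i → B i j = 0)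
    {i j : Fin n} (hij : i < j) (hu : UnitPair B i j) : B⁻¹ i j = -B i j := by
  have hn : 1 < n := by have := Fin.lt_def.mp hij; have := j.isLt; omega
  rw [inv_eq_sum_neg_pow h1 h2, Matrix.sum_apply,
    Finset.sum_eq_single_of_mem 1 (Finset.mem_range.mpr hn)]
  · rw [pow_one, Matrix.neg_apply, Matrix.sub_apply, one_apply_ne hij.ne, sub_zero]
  · intro m _ hm
    rcases m with _ | _ | m
    · rw [pow_zero, one_apply_ne hij.ne]
    · exact absurd rfl hm
    · rw [neg_pow_apply, hu.2 (m + 2) (by omega), mul_zero]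

theorem unitPair_of_not_primePair {i j : Fin n} (hnp : ¬PrimePair B i j) (hij : i < j)
    (hB : 1 ≤ B i j) : UnitPair B i j := by
  have hzero : ¬ZeroPair B i j := fun hz => by
    have := hz 1 le_rfl
    rw [pow_one, Matrix.sub_apply, one_apply_ne hij.ne] at this
    omega
  have hcomp : ¬CompositePair B i j := fun ⟨v, hiv, hvj, hc⟩ => by
    have := hc 1 le_rfl
    rw [pow_one, Matrix.sub_apply, one_apply_ne hij.ne, vertexDelete, of_apply,
      if_neg (by rintro ⟨-, rfl | rfl⟩ <;> exact lt_irrefl _ ‹_›)] at this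
    omega
  unfold PrimePair at hnp
  tauto

theorem bipartite_of_isSignable_inv (h1 : ∀ i, B i i = 1)
    (h2 : ∀ i j : Fin n, j < i → B i j = 0) (h3 : ∀ i j : Fin n, i < j → 0 ≤ B i j)
    (hnp : ∀ i j : Fin n, ¬PrimePair B i j) (hB : IsSignable B⁻¹) :
    ∃ c : Fin n → Bool, ∀ i j : Fin n, i < j → 1 ≤ B i j → c i ≠ c j := by
  obtain ⟨s, hs, hsB⟩ := hB
  refine ⟨fun i => decide (s i = 1), fun i j hij hBij => ?_⟩
  have hsij := hsB i j
  rw [inv_apply_of_unitPair h1 h2 hij (unitPair_of_not_primePair (hnp i j) hij hBij), abs_neg,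
    abs_of_nonneg (h3 i j hij)] at hsij
  rcases hs i with hi | hi <;> rcases hs j with hj | hj <;> simp only [hi, hj] at hsij ⊢ <;>
    first | omega | decide

theorem isSignable_inv_of_bipartite (h1 : ∀ i, B i i = 1)
    (h2 : ∀ i j : Fin n, j < i → B i j = 0) (h3 : ∀ i j : Fin n, i < j → 0 ≤ B i j)
    (hc : ∃ c : Fin n → Bool, ∀ i j : Fin n, i < j → 1 ≤ B i j → c i ≠ c j) :
    IsSignable B⁻¹ := by
  obtain ⟨c, hc⟩ := hc
  set s : Fin n → ℤ := fun i => if c i then 1 else -1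
  have hN := isStrictUpperTriangular_sub_one h1 h2
  have hN_nonneg : ∀ i j, 0 ≤ (B - 1) i j := fun i j => by
    rcases lt_or_ge i j with hij | hji
    · rw [Matrix.sub_apply, one_apply_ne hij.ne, sub_zero]
      exact h3 i j hij
    · rw [hN i j hji]
  have hs_sq : ∀ i, s i * s i = 1 := fun i => by by_cases h : c i <;> simp [s, h]
  have hs_edge : ∀ i j, (B - 1) i j ≠ 0 → s i * s j = -1 := fun i j h => by
    have hij : i < j := lt_of_not_ge fun hji => h (hN i j hji)
    rw [Matrix.sub_apply, one_apply_ne hij.ne, sub_zero] at h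
    have hcij := hc i j hij (by have := h3 i j hij; omega)
    cases hi : c i <;> cases hj : c j <;> simp_all [s]
  refine isSignable_of_mul_apply_mul_nonneg (s := s)
    (fun i => by by_cases h : c i <;> simp [s, h]) fun i j => ?_
  rw [inv_eq_sum_neg_pow h1 h2, Matrix.sum_apply, Finset.mul_sum, Finset.sum_mul]
  refine Finset.sum_nonneg fun m _ => ?_
  rw [mul_neg_pow_apply_mul hs_sq hs_edge]
  exact pow_apply_nonneg hN_nonneg m i j

end Unitriangular

theorem stmt14_general {n : ℕ} (B : Matrix (Fin n) (Fin n) ℤ)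
    (h1 : ∀ i, B i i = 1) (h2 : ∀ i j : Fin n, j < i → B i j = 0)
    (h3 : ∀ i j : Fin n, i < j → 0 ≤ B i j)
    (hnp : ∀ i j : Fin n, ¬PrimePair B i j) :
    IsSignable B⁻¹ ↔
      ∃ c : Fin n → Bool, ∀ i j : Fin n, i < j → 1 ≤ B i j → c i ≠ c j :=
  ⟨bipartite_of_isSignable_inv h1 h2 h3 hnp, isSignable_inv_of_bipartite h1 h2 h3⟩

/-- If `D` has no prime pairs, then `B` is signable iff `D` is
bipartite. -/
theorem stmt14 {n : ℕ} (hn : 1 ≤ n) (B : Matrix (Fin n) (Fin n) ℤ)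
    (h1 : ∀ i, B i i = 1) (h2 : ∀ i j : Fin n, j < i → B i j = 0)
    (h3 : ∀ i j : Fin n, i < j → 0 ≤ B i j)
    (hnp : ∀ i j : Fin n, ¬PrimePair B i j) :
    IsSignable B⁻¹ ↔
      ∃ c : Fin n → Bool, ∀ i j : Fin n, i < j → 1 ≤ B i j → c i ≠ c j :=
  stmt14_general B h1 h2 h3 hnp
end
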